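/- Let R be a reduced commutative ring, p a prime number, s a natural number, and u = (1+T)^(p^s) ∈ R[[T]]. Let Q ∈ R[X, X⁻¹] be a Laurent polynomial at least one of whose coefficients is a unit of R. Then the image Q(u) of Q under the ring homomorphism R[X, X⁻¹] → R[[T]] sending X to u is not a zero divisor in R[[T]]. -/

import Mathlib

/-- Evaluation of Laurent polynomials at a unit `u` of the power series ring: the `R`-algebra
homomorphism `R[X, X⁻¹] → R[[T]]` sending `X` to `u` (it sends `X^n` to `u^n` for all `n : ℤ`,
negative powers of `u` being taken in the unit group). -/
noncomputable def laurentEvalUnit {R : Type*} [CommRing R] (u : (PowerSeries R)ˣ) :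
    LaurentPolynomial R →ₐ[R] PowerSeries R :=
  AddMonoidAlgebra.lift R (PowerSeries R) ℤ
    ((Units.coeHom (PowerSeries R)).comp (zpowersHom (PowerSeries R)ˣ u))

lemma laurentEvalUnit_T {R : Type*} [CommRing R] (u : (PowerSeries R)ˣ) (n : ℤ) :
    laurentEvalUnit u (LaurentPolynomial.T n) = ((u ^ n : (PowerSeries R)ˣ) : PowerSeries R) := by
  show (AddMonoidAlgebra.lift R (PowerSeries R) ℤ
      ((Units.coeHom (PowerSeries R)).comp (zpowersHom (PowerSeries R)ˣ u)))
      (AddMonoidAlgebra.single n 1) = _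
  rw [AddMonoidAlgebra.lift_single]
  simp

lemma laurentEvalUnit_toLaurent {R : Type*} [CommRing R] (u : (PowerSeries R)ˣ)
    (P : Polynomial R) :
    laurentEvalUnit u (Polynomial.toLaurent P) = Polynomial.aeval (u : PowerSeries R) P := by
  rw [← Polynomial.toLaurentAlg_apply]
  have h : (laurentEvalUnit u).comp Polynomial.toLaurentAlg
      = Polynomial.aeval (u : PowerSeries R) := by
    apply Polynomial.algHom_ext
    simp [Polynomial.toLaurentAlg_apply, Polynomial.toLaurent_X, laurentEvalUnit_T]
  exact DFunLike.congr_fun h P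

lemma aeval_one_add_X_pow_ne_zero {k : Type*} [Field k] {N : ℕ} (hN : N ≠ 0)
    {v : PowerSeries k} (hv : v = (1 + PowerSeries.X) ^ N)
    {P : Polynomial k} (hP : P ≠ 0) : Polynomial.aeval v P ≠ 0 := by
  intro h
  have halg : IsAlgebraic k v := ⟨P, hP, h⟩
  have hint : IsIntegral k (v - 1) := halg.isIntegral.sub isIntegral_one
  have hw : v - 1 ≠ 0 := by
    intro h0
    have h1 : v = 1 := by linear_combination h0
    have hcast : ((((1 + Polynomial.X) ^ N : Polynomial k) : PowerSeries k))
        = (1 + PowerSeries.X) ^ N := by push_cast; rfl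
    have := congrArg (PowerSeries.coeff N) (h1.symm.trans hv)
    rw [← hcast, Polynomial.coeff_coe, Polynomial.coeff_one_add_X_pow, Nat.choose_self,
      PowerSeries.coeff_one] at this
    simp [hN] at this
  have hunit := (hint.isUnit hw).map PowerSeries.constantCoeff
  have hc : PowerSeries.constantCoeff (v - 1) = 0 := by
    simp [hv, map_pow]
  rw [hc] at hunit
  exact not_isUnit_zero hunit

/-- **Algebraic core of Theorem `welldefinedgammafactor`.** Let `R` be a reduced commutative
ring, `p` a prime, `s : ℕ`, and `u = (1+T)^(p^s) ∈ R[[T]]`. If `Q ∈ R[X, X⁻¹]` is a Laurent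
polynomial at least one of whose coefficients is a unit of `R`, then the image `Q(u)` of `Q`
under the ring homomorphism `R[X, X⁻¹] → R[[T]]` sending `X` to `u` is not a zero divisor in
`R[[T]]`. -/
theorem laurent_eval_at_one_add_T_pow_nonZeroDivisor
    {R : Type*} [CommRing R] [IsReduced R] (p : ℕ) (hp : p.Prime) (s : ℕ)
    (u : (PowerSeries R)ˣ) (hu : (u : PowerSeries R) = (1 + PowerSeries.X) ^ p ^ s)
    (Q : LaurentPolynomial R) (hQ : ∃ n : ℤ, IsUnit (Q.coeff n)) :
    laurentEvalUnit u Q ∈ nonZeroDivisors (PowerSeries R) := by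
  rw [mem_nonZeroDivisors_iff_right]
  intro f hf
  rcases subsingleton_or_nontrivial R with hR | hR
  · exact Subsingleton.elim f 0
  obtain ⟨n, P, hP⟩ := Q.exists_T_pow
  obtain ⟨n₀, hn₀⟩ := hQ
  -- the coefficient of `toLaurent P` at `n₀ + n` is `Q n₀`
  have hcoeff : (Polynomial.toLaurent P).coeff (n₀ + n) = Q.coeff n₀ := by
    rw [hP]
    simpa using AddMonoidAlgebra.coeff_mul_single_apply Q (1 : R) n (n₀ + n)
  have hm : 0 ≤ n₀ + n := by
    by_contra hneg
    have : (n₀ + n) ∉ (Polynomial.toLaurent P).coeff.support := by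
      rw [LaurentPolynomial.support_coeff_toLaurent]
      simp only [Finset.mem_map, Nat.castEmbedding_apply]
      rintro ⟨a, -, ha⟩
      exact hneg (ha ▸ Int.natCast_nonneg a)
    rw [Finsupp.notMem_support_iff, hcoeff] at this
    exact not_isUnit_zero (this ▸ hn₀)
  have hPc : IsUnit (P.coeff (n₀ + n).toNat) := by
    have : (Polynomial.toLaurent P).coeff ((((n₀ + n).toNat : ℕ) : ℤ)) = P.coeff (n₀ + n).toNat := by
      rw [Polynomial.toLaurent_apply]
      exact Finsupp.mapDomain_apply Nat.cast_injective _ _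
    rw [Int.toNat_of_nonneg hm, hcoeff] at this
    exact this ▸ hn₀
  -- the polynomial equation
  have hfP : f * Polynomial.aeval (u : PowerSeries R) P = 0 := by
    have := congrArg (laurentEvalUnit u) hP
    rw [map_mul, laurentEvalUnit_toLaurent, laurentEvalUnit_T] at this
    rw [this, ← mul_assoc, hf, zero_mul]
  -- each coefficient of f lies in every prime
  have key : ∀ i : ℕ, IsNilpotent (PowerSeries.coeff i f) := by
    intro i
    rw [nilpotent_iff_mem_prime]
    intro J hJ
    haveI := hJ
    set k := FractionRing (R ⧸ J)
    set φ : R →+* k := (algebraMap (R ⧸ J) k).comp (Ideal.Quotient.mk J) with hφdef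
    have hker : ∀ x : R, φ x = 0 → x ∈ J := by
      intro x hx
      have : Ideal.Quotient.mk J x = 0 := by
        apply IsFractionRing.injective (R ⧸ J) k
        simpa [hφdef] using hx
      exact Ideal.Quotient.eq_zero_iff_mem.mp this
    -- map the equation through φ
    have hcomp : (PowerSeries.map φ).comp (algebraMap R (PowerSeries R))
        = (algebraMap k (PowerSeries k)).comp φ := by
      ext r
      simp [PowerSeries.algebraMap_apply, PowerSeries.map_C]
    have h2 : PowerSeries.map φ f
        * Polynomial.aeval (PowerSeries.map φ (u : PowerSeries R)) (P.map φ) = 0 := by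
      have := congrArg (PowerSeries.map φ) hfP
      rw [map_mul, map_zero] at this
      rw [← this]
      congr 1
      rw [Polynomial.aeval_def, Polynomial.aeval_def, Polynomial.eval₂_map,
        Polynomial.hom_eval₂, hcomp]
    have hvv : PowerSeries.map φ (u : PowerSeries R)
        = (1 + PowerSeries.X) ^ p ^ s := by
      rw [hu, map_pow, map_add, map_one, PowerSeries.map_X]
    have hPm : P.map φ ≠ 0 := by
      intro h0
      have : φ (P.coeff (n₀ + n).toNat) = 0 := by
        rw [← Polynomial.coeff_map, h0, Polynomial.coeff_zero]
      exact (hPc.map φ).ne_zero this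
    have hae : Polynomial.aeval (PowerSeries.map φ (u : PowerSeries R)) (P.map φ) ≠ 0 :=
      aeval_one_add_X_pow_ne_zero (pow_ne_zero s hp.ne_zero) hvv hPm
    have hf0 : PowerSeries.map φ f = 0 := by
      rcases mul_eq_zero.mp h2 with h | h
      · exact h
      · exact absurd h hae
    apply hker
    rw [← PowerSeries.coeff_map, hf0, map_zero]
  ext i
  simpa using (key i).eq_zero
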